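/- For all integers n ≥ 1 and a, b, c ≥ 0, H*_n({2}^a,1,{2}^b,1,{2}^c,1) = 2·∑_{k=1}^{n} C(n,k)/(k^{2(a+b+c)+3}·C(n+k,k)) + 4·∑_{k=1}^{n} H_{k-1}(2c+1)·C(n,k)/(k^{2a+2b+2}·C(n+k,k)) + 4·∑_{k=1}^{n} H_{k-1}(2b+2c+2)·C(n,k)/(k^{2a+1}·C(n+k,k)) + 8·∑_{k=1}^{n} H_{k-1}(2b+1, 2c+1)·C(n,k)/(k^{2a+1}·C(n+k,k)). -/

import Mathlib

/-!
Write `w(n, k) = C(n, k) / C(n + k, k)` and `T_s g (n) = ∑_{k=1}^n g(k) w(n, k) / k^s`.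
A leading entry `2` or `1` of `H*` applies `F ↦ (n ↦ ∑_{k=1}^n F(k) / k^s)` with `s = 2` or `1`,
and on transforms these operators act by
  `∑_{k ≤ n} T_s g (k) / k² = T_{s+2} g (n)`,
  `∑_{k ≤ n} T_s g (k) / k = T_{s+1} g (n) + 2 T_1 (l ↦ ∑_{i < l} g(i) / i^s) (n)`.
Exchanging the order of summation reduces both to
  `∑_{k ≤ n} w(k, j) / k² = w(n, j) / j²`   and
  `∑_{k ≤ n} w(k, i) / k = w(n, i) / i + 2 ∑_{i < j ≤ n} w(n, j) / j`,
which telescope by `w(n+1, j) - w(n, j) = j² w(n+1, j) / (n+1)²` and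
`(m - i) w(m, i) = (m + i + 1) w(m, i + 1)`. Starting from `H*_n(1) = 2 T_1 1 (n)` and peeling
off the entries from the right gives the four terms; the nested partial sums `l ↦ ∑_{i < l} …`
are exactly the strict sums `H_{l-1}(…)`.
-/

open Finset

/-- Sign factor for an alternating multiple harmonic sum entry. -/
def aSgn (s : ℤ) : ℚ := if 0 < s then 1 else -1

/-- Alternating multiple harmonic sum `H_n(s₁,…,s_ℓ)` (strict indices). -/
def Hh : ℕ → List ℤ → ℚ
  | _, [] => 1
  | n, s :: r => ∑ k ∈ Finset.Icc 1 n, aSgn s ^ k / (k : ℚ) ^ s.natAbs * Hh (k - 1) r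

/-- Alternating multiple harmonic star sum `H*_n(s₁,…,s_ℓ)` (weak indices). -/
def Hstar : ℕ → List ℤ → ℚ
  | _, [] => 1
  | n, s :: r => ∑ k ∈ Finset.Icc 1 n, aSgn s ^ k / (k : ℚ) ^ s.natAbs * Hstar k r

/-- All compositions (ordered tuples of positive integers) of `w`. -/
def comps : ℕ → List (List ℕ)
  | 0 => [[]]
  | (w+1) => (List.range (w+1)).flatMap (fun j => (comps (w - j)).map (fun l => (j+1) :: l))
decreasing_by simp_wf <;> omega

/-- Coerce a list of naturals to a list of integers. -/
def natList (l : List ℕ) : List ℤ := l.map (fun m => (m : ℤ))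

def binomRatio (n j : ℕ) : ℚ := (n.choose j : ℚ) / ((n + j).choose j : ℚ)

lemma binomRatio_zero_right (n : ℕ) : binomRatio n 0 = 1 := by simp [binomRatio]

lemma binomRatio_of_lt {n j : ℕ} (h : n < j) : binomRatio n j = 0 := by
  simp [binomRatio, Nat.choose_eq_zero_of_lt h]

lemma cast_choose_add_ne_zero (n j : ℕ) : ((n + j).choose j : ℚ) ≠ 0 :=
  Nat.cast_ne_zero.mpr (Nat.choose_pos (Nat.le_add_left j n)).ne'

lemma binomRatio_succ_right (m i : ℕ) :
    ((m : ℚ) - i) * binomRatio m i = ((m : ℚ) + i + 1) * binomRatio m (i + 1) := by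
  rcases lt_or_ge m i with h | h
  · rw [binomRatio_of_lt h, binomRatio_of_lt (by omega)]; ring
  have h₁ : (m.choose (i + 1) : ℚ) * (i + 1) = m.choose i * ((m : ℚ) - i) := by
    exact_mod_cast Nat.choose_succ_right_eq m i
  have h₂ : ((m + i : ℕ) + 1 : ℚ) * (m + i).choose i = (m + i + 1).choose (i + 1) * (i + 1) := by
    exact_mod_cast Nat.add_one_mul_choose_eq (m + i) i
  have h₃ := cast_choose_add_ne_zero m i
  have h₄ : ((m + i + 1).choose (i + 1) : ℚ) ≠ 0 := cast_choose_add_ne_zero m (i + 1)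
  rw [binomRatio, binomRatio, ← add_assoc]
  field_simp
  push_cast at h₂
  refine mul_right_cancel₀ (by positivity : (i : ℚ) + 1 ≠ 0) ?_
  linear_combination
    -(m.choose i : ℚ) * ((m : ℚ) - i) * h₂ - ((m : ℚ) + i + 1) * ((m + i).choose i : ℚ) * h₁

lemma binomRatio_succ_sub (n j : ℕ) :
    binomRatio (n + 1) j - binomRatio n j
      = (j : ℚ) ^ 2 / ((n : ℚ) + 1) ^ 2 * binomRatio (n + 1) j := by
  rcases lt_or_ge (n + 1) j with h | h
  · rw [binomRatio_of_lt h, binomRatio_of_lt (by omega)]; ring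
  have h₁ : (n.choose j : ℚ) * (n + 1) = (n + 1).choose j * ((n : ℚ) + 1 - j) := by
    exact_mod_cast Nat.choose_mul_succ_eq n j
  have h₂ :
      ((n + j).choose j : ℚ) * ((n : ℚ) + 1 + j) = (n + 1 + j).choose j * ((n : ℚ) + 1) := by
    have := Nat.choose_mul_succ_eq (n + j) j
    rw [show n + j + 1 - j = n + 1 by omega, show n + j + 1 = n + 1 + j by omega] at this
    exact_mod_cast this
  have h₃ := cast_choose_add_ne_zero n j
  have h₄ := cast_choose_add_ne_zero (n + 1) j
  rw [binomRatio, binomRatio]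
  field_simp
  linear_combination
    -((n + j).choose j * ((n : ℚ) + 1 + j)) * h₁ + (n.choose j : ℚ) * ((n : ℚ) + 1) * h₂

lemma two_mul_sum_Ioc_mul_binomRatio (m i : ℕ) :
    2 * ∑ j ∈ Ioc i m, (j : ℚ) * binomRatio m j = ((m : ℚ) - i) * binomRatio m i := by
  induction hd : m - i generalizing i with
  | zero =>
    rcases (show m ≤ i by omega).eq_or_lt with rfl | h
    · simp
    · simp [binomRatio_of_lt h, Ioc_eq_empty_of_le h.le]
  | succ d ih =>
    rw [← Icc_add_one_left_eq_Ioc, Icc_eq_cons_Ioc (by omega), sum_cons, mul_add,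
      ih (i + 1) (by omega), binomRatio_succ_right m i]
    push_cast
    ring

lemma sum_Icc_binomRatio_div_sq {j : ℕ} (hj : j ≠ 0) (n : ℕ) :
    ∑ k ∈ Icc 1 n, binomRatio k j / (k : ℚ) ^ 2 = binomRatio n j / (j : ℚ) ^ 2 := by
  induction n with
  | zero => simp [binomRatio_of_lt (Nat.pos_of_ne_zero hj)]
  | succ n ih =>
    have hj' : (j : ℚ) ≠ 0 := by exact_mod_cast hj
    have := binomRatio_succ_sub n j
    rw [sum_Icc_succ_top (by omega), ih]
    push_cast
    field_simp at this ⊢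
    linear_combination -this

-- At `i = 0` the term `binomRatio n 0 / 0` is `0`, leaving `∑_{k ≤ n} 1/k = 2 ∑_{j ≤ n} w(n, j)/j`.
lemma sum_Icc_binomRatio_div (i n : ℕ) :
    ∑ k ∈ Icc 1 n, binomRatio k i / k
      = binomRatio n i / i + 2 * ∑ j ∈ Ioc i n, binomRatio n j / j := by
  induction n with
  | zero => rcases i with _ | i <;> simp [binomRatio_of_lt]
  | succ n ih =>
    have hstep (j : ℕ) : (binomRatio (n + 1) j - binomRatio n j) / j
        = j / ((n : ℚ) + 1) ^ 2 * binomRatio (n + 1) j := by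
      rw [binomRatio_succ_sub, pow_two, mul_div_right_comm, div_right_comm, mul_self_div_self]
    have hext : ∑ j ∈ Ioc i n, binomRatio n j / j = ∑ j ∈ Ioc i (n + 1), binomRatio n j / j := by
      refine sum_subset (Ioc_subset_Ioc_right n.le_succ) fun j hj hjn => ?_
      rw [binomRatio_of_lt (by simp only [mem_Ioc] at hj hjn; omega), zero_div]
    have hdiff : ∑ j ∈ Ioc i (n + 1), binomRatio (n + 1) j / j
          - ∑ j ∈ Ioc i (n + 1), binomRatio n j / j
        = ((n : ℚ) + 1 - i) * binomRatio (n + 1) i / (2 * ((n : ℚ) + 1) ^ 2) := by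
      have htel := two_mul_sum_Ioc_mul_binomRatio (n + 1) i
      push_cast at htel
      rw [← sum_sub_distrib, ← htel]
      simp_rw [← sub_div, hstep, div_mul_eq_mul_div, ← sum_div]
      field_simp
    rw [sum_Icc_succ_top (by omega), ih, hext]
    linear_combination (norm := skip) -hstep i - 2 * hdiff
    push_cast
    field_simp
    ring

def sumDivPow (s : ℕ) : (ℕ → ℚ) →ₗ[ℚ] ℕ → ℚ where
  toFun g n := ∑ k ∈ Icc 1 n, g k / (k : ℚ) ^ s
  map_add' g h := by ext n; simp [add_div, sum_add_distrib]
  map_smul' c g := by ext n; simp [mul_div_assoc, mul_sum]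

@[simp]
lemma sumDivPow_apply (s : ℕ) (g : ℕ → ℚ) (n : ℕ) :
    sumDivPow s g n = ∑ k ∈ Icc 1 n, g k / (k : ℚ) ^ s := rfl

def binomTransform (s : ℕ) (g : ℕ → ℚ) (n : ℕ) : ℚ :=
  ∑ j ∈ Icc 1 n, g j / (j : ℚ) ^ s * binomRatio n j

lemma binomTransform_eq_sum_Icc {k N : ℕ} (h : k ≤ N) (s : ℕ) (g : ℕ → ℚ) :
    binomTransform s g k = ∑ j ∈ Icc 1 N, g j / (j : ℚ) ^ s * binomRatio k j :=
  sum_subset (Icc_subset_Icc_right h) fun j hj hjk => by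
    rw [binomRatio_of_lt (by simp only [mem_Icc] at hj hjk; omega), mul_zero]

lemma sumDivPow_binomTransform_apply (t s : ℕ) (g : ℕ → ℚ) (n : ℕ) :
    sumDivPow t (binomTransform s g) n
      = ∑ j ∈ Icc 1 n, g j / (j : ℚ) ^ s * ∑ k ∈ Icc 1 n, binomRatio k j / (k : ℚ) ^ t := by
  simp only [sumDivPow_apply, mul_sum]
  rw [sum_comm]
  refine sum_congr rfl fun k hk => ?_
  rw [binomTransform_eq_sum_Icc (mem_Icc.1 hk).2, sum_div]
  simp_rw [mul_div_assoc]

lemma sumDivPow_two_binomTransform (s : ℕ) (g : ℕ → ℚ) :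
    sumDivPow 2 (binomTransform s g) = binomTransform (s + 2) g := by
  ext n
  rw [sumDivPow_binomTransform_apply]
  refine sum_congr rfl fun j hj => ?_
  rw [sum_Icc_binomRatio_div_sq (by simp only [mem_Icc] at hj; omega), pow_add]
  ring

lemma sumDivPow_one_binomTransform (s : ℕ) (g : ℕ → ℚ) :
    sumDivPow 1 (binomTransform s g)
      = binomTransform (s + 1) g
        + (2 : ℚ) • binomTransform 1 (fun l => sumDivPow s g (l - 1)) := by
  ext n
  rw [sumDivPow_binomTransform_apply, Pi.add_apply, Pi.smul_apply, smul_eq_mul]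
  simp_rw [pow_one, sum_Icc_binomRatio_div, mul_add, sum_add_distrib, mul_sum]
  congr 1
  · refine sum_congr rfl fun j _ => ?_
    rw [pow_succ]
    ring
  · have hswap (j l : ℕ) : j ∈ Icc 1 n ∧ l ∈ Ioc j n ↔ j ∈ Icc 1 (l - 1) ∧ l ∈ Icc 1 n := by
      simp only [mem_Icc, mem_Ioc]
      omega
    rw [sum_comm' hswap]
    simp only [binomTransform, sumDivPow_apply, pow_one, sum_div, sum_mul, mul_sum]
    exact sum_congr rfl fun l _ => sum_congr rfl fun j _ => by ring

lemma sumDivPow_two_pow_binomTransform (a s : ℕ) (g : ℕ → ℚ) :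
    (sumDivPow 2 ^ a) (binomTransform s g) = binomTransform (s + 2 * a) g := by
  induction a with
  | zero => simp
  | succ a ih => rw [pow_succ', Module.End.mul_apply, ih, sumDivPow_two_binomTransform]; ring_nf

lemma Hstar_cons_of_pos {s : ℤ} (hs : 0 < s) (L : List ℤ) :
    (fun n => Hstar n (s :: L)) = sumDivPow s.natAbs (fun n => Hstar n L) := by
  ext n
  simp [Hstar, aSgn, hs, div_eq_inv_mul]

lemma Hstar_replicate_two_append (a : ℕ) (L : List ℤ) :
    (fun n => Hstar n (List.replicate a 2 ++ L)) = (sumDivPow 2 ^ a) (fun n => Hstar n L) := by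
  induction a with
  | zero => simp
  | succ a ih =>
    rw [List.replicate_succ, List.cons_append, Hstar_cons_of_pos two_pos, ih, pow_succ',
      Module.End.mul_apply]
    rfl

lemma Hstar_singleton_one : (fun n => Hstar n [1]) = (2 : ℚ) • binomTransform 1 1 := by
  rw [Hstar_cons_of_pos one_pos]
  ext n
  have harmonic := sum_Icc_binomRatio_div 0 n
  rw [← Icc_add_one_left_eq_Ioc, zero_add] at harmonic
  simp_all [Hstar, binomTransform, binomRatio_zero_right, mul_sum, div_eq_inv_mul]

lemma binomTransform_eq_sum_choose (s : ℕ) (g : ℕ → ℚ) (n : ℕ) :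
    binomTransform s g n
      = ∑ k ∈ Icc 1 n, g k * n.choose k / ((k : ℚ) ^ s * (n + k).choose k) :=
  sum_congr rfl fun k _ => by rw [binomRatio, div_mul_div_comm]

lemma sumDivPow_pred_Hh {s : ℤ} (hs : 0 < s) {t : ℕ} (ht : s.natAbs = t) (r : List ℤ) :
    (fun l => sumDivPow t (fun i => Hh (i - 1) r) (l - 1)) = fun l => Hh (l - 1) (s :: r) := by
  ext l
  simp [Hh, aSgn, hs, ← ht, div_eq_inv_mul]

lemma Hh_nil_pred : (fun i => Hh (i - 1) []) = 1 := by
  ext i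
  simp [Hh]

theorem stmt4_general (n a b c : ℕ) :
    Hstar n (List.replicate a 2 ++ [1] ++ List.replicate b 2 ++ [1]
              ++ List.replicate c 2 ++ [1])
      = 2 * ∑ k ∈ Finset.Icc 1 n,
            (n.choose k : ℚ) / ((k : ℚ) ^ (2*(a+b+c)+3) * ((n+k).choose k))
        + 4 * ∑ k ∈ Finset.Icc 1 n,
            Hh (k-1) [2 * (c : ℤ) + 1] * (n.choose k)
              / ((k : ℚ) ^ (2*a+2*b+2) * ((n+k).choose k))
        + 4 * ∑ k ∈ Finset.Icc 1 n,
            Hh (k-1) [2 * (b : ℤ) + 2 * (c : ℤ) + 2] * (n.choose k)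
              / ((k : ℚ) ^ (2*a+1) * ((n+k).choose k))
        + 8 * ∑ k ∈ Finset.Icc 1 n,
            Hh (k-1) [2 * (b : ℤ) + 1, 2 * (c : ℤ) + 1] * (n.choose k)
              / ((k : ℚ) ^ (2*a+1) * ((n+k).choose k)) := by
  have hlist : List.replicate a (2 : ℤ) ++ [1] ++ List.replicate b 2 ++ [1]
        ++ List.replicate c 2 ++ [1]
      = List.replicate a 2 ++ 1 :: (List.replicate b 2 ++ 1 :: (List.replicate c 2 ++ [1])) := by
    simp
  rw [hlist]
  change (fun m => Hstar m _) n = _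
  rw [Hstar_replicate_two_append, Hstar_cons_of_pos one_pos, Hstar_replicate_two_append,
    Hstar_cons_of_pos one_pos, Hstar_replicate_two_append, Hstar_singleton_one]
  simp only [Int.natAbs_one, map_add, map_smul, sumDivPow_two_pow_binomTransform,
    sumDivPow_one_binomTransform, ← Hh_nil_pred]
  rw [sumDivPow_pred_Hh (s := 2 * c + 1) (t := 1 + 2 * c) (by omega) (by omega),
    sumDivPow_pred_Hh (s := 2 * b + 2 * c + 2) (t := 1 + 2 * c + 1 + 2 * b) (by omega)
      (by omega),
    sumDivPow_pred_Hh (s := 2 * b + 1) (t := 1 + 2 * b) (by omega) (by omega)]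
  simp only [Pi.add_apply, Pi.smul_apply, smul_eq_mul, binomTransform_eq_sum_choose, Hh.eq_1,
    one_mul]
  ring_nf

theorem stmt4 (n a b c : ℕ) (hn : 1 ≤ n) :
    Hstar n (List.replicate a 2 ++ [1] ++ List.replicate b 2 ++ [1]
              ++ List.replicate c 2 ++ [1])
      = 2 * ∑ k ∈ Finset.Icc 1 n,
            (n.choose k : ℚ) / ((k : ℚ) ^ (2*(a+b+c)+3) * ((n+k).choose k))
        + 4 * ∑ k ∈ Finset.Icc 1 n,
            Hh (k-1) [2 * (c : ℤ) + 1] * (n.choose k)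
              / ((k : ℚ) ^ (2*a+2*b+2) * ((n+k).choose k))
        + 4 * ∑ k ∈ Finset.Icc 1 n,
            Hh (k-1) [2 * (b : ℤ) + 2 * (c : ℤ) + 2] * (n.choose k)
              / ((k : ℚ) ^ (2*a+1) * ((n+k).choose k))
        + 8 * ∑ k ∈ Finset.Icc 1 n,
            Hh (k-1) [2 * (b : ℤ) + 1, 2 * (c : ℤ) + 1] * (n.choose k)
              / ((k : ℚ) ^ (2*a+1) * ((n+k).choose k)) :=
  stmt4_general n a b c
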